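/- arXiv:2111.01849 — 7 statements merged into one kernel-verified Lean document; each statement's English description precedes it below -/
import Mathlib

section
/- Let G be the n×n loop network matrix over a field with G[i+1,i] = g_i for i = 1,…,n-1 and G[1,n] = g_n, all other entries zero, and let P = g_1 * g_2 * ⋯ * g_n with 1 - P ≠ 0. Then I - G is invertible and the diagonal entries of T = (I-G)^{-1} all equal 1/(1-P). -/
/-! `G` is a weighted cyclic shift, so `G ^ n = P • 1` and `1 - G` has the inverse
`(1 - P)⁻¹ • ∑_{k < n} G ^ k`. The `k`-th power moves every index `k` steps around the cycle,
so for `0 < k < n` it has zero diagonal and only `G ^ 0 = 1` contributes to `T i i`. -/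

/-- The `n × n` network matrix of a directed `n`-cycle: entry `(i+1 mod n, i)` is `g i`. -/
def cycleMatrix {K : Type*} [Field K] {n : ℕ} [NeZero n] (g : Fin n → K) : Matrix (Fin n) (Fin n) K :=
  Matrix.of fun i j => if i = j + 1 then g j else 0

open Finset Fin.NatCast

theorem one_sub_mul_smul_geom_sum_eq_one {K A : Type*} [Field K] [Ring A] [Algebra K A]
    {x : A} {c : K} {n : ℕ} (hx : x ^ n = algebraMap K A c) (hc : 1 - c ≠ 0) :
    (1 - x) * ((1 - c)⁻¹ • ∑ k ∈ range n, x ^ k) = 1 := by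
  rw [mul_smul_comm, mul_neg_geom_sum, hx, ← map_one (algebraMap K A), ← map_sub,
    Algebra.smul_def, ← map_mul, inv_mul_cancel₀ hc, map_one]

section cycleMatrix

variable {K : Type*} [Field K] {n : ℕ} [NeZero n] (g : Fin n → K)

theorem cycleMatrix_pow_apply (k : ℕ) (i j : Fin n) :
    (cycleMatrix g ^ k) i j = if i = j + k then ∏ m ∈ range k, g (j + (m : Fin n)) else 0 := by
  induction k generalizing i with
  | zero => simp [Matrix.one_apply]
  | succ k ih =>
    rw [pow_succ', Matrix.mul_apply, sum_eq_single (j + k)]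
    · rw [ih, if_pos rfl, prod_range_succ, Nat.cast_succ, ← add_assoc]
      simp only [cycleMatrix, Matrix.of_apply]
      split_ifs <;> ring
    · intro l _ hl
      simp [ih, hl]
    · simp

theorem cycleMatrix_pow_card : cycleMatrix g ^ n = algebraMap K _ (∏ i, g i) := by
  have hprod (j : Fin n) : ∏ m ∈ range n, g (j + m) = ∏ i, g i := by
    rw [← Fin.prod_univ_eq_prod_range (fun m => g (j + m))]
    simp only [Fin.cast_val_eq_self]
    exact Equiv.prod_comp (Equiv.addLeft j) g
  ext i j
  rw [cycleMatrix_pow_apply, Fin.natCast_self, add_zero, hprod, Matrix.algebraMap_eq_diagonal,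
    Matrix.diagonal_apply, Pi.algebraMap_apply, Algebra.algebraMap_self, RingHom.id_apply]

theorem sum_cycleMatrix_pow_apply_self (i : Fin n) :
    (∑ k ∈ range n, cycleMatrix g ^ k) i i = 1 := by
  rw [Matrix.sum_apply, sum_eq_single 0 _ (by simp [NeZero.ne n])]
  · simp
  intro k hk hk0
  rw [cycleMatrix_pow_apply, if_neg]
  intro h
  have hdvd : n ∣ k := Fin.natCast_eq_zero.mp (by simpa using h)
  exact hk0 (Nat.eq_zero_of_dvd_of_lt hdvd (mem_range.mp hk))

end cycleMatrix

theorem cycle_diag_entries_general {K : Type*} [Field K] {n : ℕ} [NeZero n] (g : Fin n → K)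
    (hP : 1 - ∏ i, g i ≠ 0) :
    IsUnit (1 - cycleMatrix g) ∧
      ∀ i, (1 - cycleMatrix g)⁻¹ i i = (1 - ∏ i, g i)⁻¹ := by
  have hinv := one_sub_mul_smul_geom_sum_eq_one (cycleMatrix_pow_card g) hP
  refine ⟨.of_mul_eq_one _ hinv, fun i => ?_⟩
  rw [Matrix.inv_eq_right_inv hinv, Matrix.smul_apply, sum_cycleMatrix_pow_apply_self,
    smul_eq_mul, mul_one]

/-- For the cycle matrix with loop product `P = ∏ g i` and `1 - P ≠ 0`, `I - G` is
invertible and all diagonal entries of `T = (I - G)⁻¹` equal `(1 - P)⁻¹`. -/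
theorem cycle_diag_entries {K : Type*} [Field K] {n : ℕ} [NeZero n] (hn : 2 ≤ n) (g : Fin n → K)
    (hP : 1 - ∏ i, g i ≠ 0) :
    IsUnit (1 - cycleMatrix g) ∧
      ∀ i, (1 - cycleMatrix g)⁻¹ i i = (1 - ∏ i, g i)⁻¹ :=
  cycle_diag_entries_general g hP
end

section
/- Let G be the n×n loop network matrix of a directed n-cycle with edge weights g_1,…,g_n and P = g_1⋯g_n ≠ 1. Define, for distinct indices i, k, P_{ik} as the product of the edge weights along the directed path in the cycle from node k to node i. Then the off-diagonal entries of T = (I-G)^{-1} satisfy T_{ik} = P_{ik}/(1-P). -/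
/-- Product of the edge weights along the directed path from node `a` to node `b`
in the cycle. -/
def pathProd {K : Type*} [Field K] {n : ℕ} [NeZero n] (g : Fin n → K) (a b : Fin n) : K :=
  ∏ t ∈ Finset.range (b - a : Fin n).val, g (a + Fin.ofNat n t)

open Finset Fin.NatCast

namespace Fin

variable {n : ℕ} [NeZero n]

lemma val_sub_eq_val_sub_add_one_add_one {a b : Fin n} (h : a ≠ b) :
    (b - a).val = (b - (a + 1)).val + 1 := by
  have hba : (b - a).val ≠ 0 := by simpa [val_ne_zero_iff, sub_eq_zero] using h.symm
  rw [← sub_sub, val_sub_one_of_ne_zero (sub_ne_zero.mpr h.symm)]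
  omega

lemma val_sub_add_one_self_add_one (a : Fin n) : (a - (a + 1)).val + 1 = n := by
  obtain ⟨m, rfl⟩ := Nat.exists_eq_add_one_of_ne_zero (NeZero.ne n)
  rw [sub_add_eq_sub_sub, sub_self, zero_sub, coe_neg_one]

variable {M : Type*} [CommMonoid M]

lemma prod_range_succ_add (f : Fin n → M) (a : Fin n) (m : ℕ) :
    ∏ t ∈ range (m + 1), f (a + t) = f a * ∏ t ∈ range m, f (a + 1 + t) := by
  rw [prod_range_succ', mul_comm]
  simp [add_assoc, add_comm (1 : Fin n)]

lemma prod_range_add_eq_prod_univ (f : Fin n → M) (a : Fin n) :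
    ∏ t ∈ range n, f (a + t) = ∏ j, f j := by
  rw [← prod_univ_eq_prod_range (fun t => f (a + t))]
  simp only [cast_val_eq_self]
  exact Fintype.prod_equiv (Equiv.addLeft a) _ _ fun _ => rfl

end Fin

section

variable {K : Type*} [Field K] {n : ℕ} [NeZero n] (g : Fin n → K)

lemma pathProd_self (a : Fin n) : pathProd g a a = 1 := by
  simp [pathProd]

lemma pathProd_eq_mul_pathProd_add_one {a b : Fin n} (h : a ≠ b) :
    pathProd g a b = g a * pathProd g (a + 1) b := by
  simp only [pathProd, Fin.ofNat_eq_cast]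
  rw [Fin.val_sub_eq_val_sub_add_one_add_one h, Fin.prod_range_succ_add]

lemma mul_pathProd_add_one_self (a : Fin n) : g a * pathProd g (a + 1) a = ∏ j, g j := by
  simp only [pathProd, Fin.ofNat_eq_cast]
  rw [← Fin.prod_range_succ_add, Fin.val_sub_add_one_self_add_one, Fin.prod_range_add_eq_prod_univ]

lemma pathProd_mul_sub_cycleMatrix_eq_smul_one :
    (Matrix.of fun i k => pathProd g k i) * (1 - cycleMatrix g) = (1 - ∏ j, g j) • 1 := by
  ext i k
  simp only [Matrix.mul_apply, Matrix.sub_apply, Matrix.one_apply, cycleMatrix, Matrix.of_apply,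
    mul_sub, sum_sub_distrib, mul_ite, mul_one, mul_zero, sum_ite_eq', mem_univ, if_true,
    Matrix.smul_apply, smul_eq_mul]
  by_cases hik : i = k
  · subst hik
    rw [pathProd_self, if_pos rfl, mul_comm, mul_pathProd_add_one_self]
  · rw [if_neg hik, pathProd_eq_mul_pathProd_add_one g (Ne.symm hik)]
    ring

end

theorem cycle_offdiag_entries_general {K : Type*} [Field K] {n : ℕ} [NeZero n]
    (g : Fin n → K) (hP : 1 - ∏ i, g i ≠ 0) :
    ∀ i k : Fin n, i ≠ k →
      (1 - cycleMatrix g)⁻¹ i k = pathProd g k i * (1 - ∏ i, g i)⁻¹ := by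
  intro i k _
  have hinv :
      ((1 - ∏ j, g j)⁻¹ • Matrix.of fun i k => pathProd g k i) * (1 - cycleMatrix g) = 1 := by
    rw [Matrix.smul_mul, pathProd_mul_sub_cycleMatrix_eq_smul_one, smul_smul, inv_mul_cancel₀ hP,
      one_smul]
  rw [Matrix.inv_eq_left_inv hinv]
  simp [mul_comm]

/-- Off-diagonal entries of `T = (I - G)⁻¹`: `T i k = P_{ik} / (1 - P)`, where `P_{ik}`
is the product of edge weights along the directed path from `k` to `i`. -/
theorem cycle_offdiag_entries {K : Type*} [Field K] {n : ℕ} [NeZero n] (hn : 2 ≤ n)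
    (g : Fin n → K) (hP : 1 - ∏ i, g i ≠ 0) :
    ∀ i k : Fin n, i ≠ k →
      (1 - cycleMatrix g)⁻¹ i k = pathProd g k i * (1 - ∏ i, g i)⁻¹ :=
  cycle_offdiag_entries_general g hP
end

section
/- In a directed n-cycle with nonzero edge weights and full loop product P ≠ 1, let T = (I-G)^{-1}. For any node i and any node j with j ∉ {i, i+1}, the edge weight g_i (edge i → i+1) equals T_{ji}/T_{j,i+1} and also equals T_{i+1,j}/T_{ij}. -/
open Matrix Finset

namespace Fin

variable {n : ℕ} [NeZero n]

theorem val_add_one_of_add_one_ne_zero {a : Fin n} (h : a + 1 ≠ 0) :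
    (a + 1).val = a.val + 1 := by
  obtain ⟨m, rfl⟩ := Nat.exists_eq_add_one_of_ne_zero (NeZero.ne n)
  rw [Fin.val_add_one, if_neg]
  rintro rfl
  exact h (Fin.last_add_one m)

theorem val_lt_val_neg_one_iff {a : Fin n} : a.val < (-1 : Fin n).val ↔ a ≠ -1 := by
  obtain ⟨m, rfl⟩ := Nat.exists_eq_add_one_of_ne_zero (NeZero.ne n)
  rw [Fin.coe_neg_one, Ne, Fin.ext_iff, Fin.coe_neg_one]
  have := a.isLt
  omega

end Fin

section PathWeight

variable {n : ℕ} {M : Type*} [CommMonoid M]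

/-- The cyclic interval `[a, b)` of `Fin n`: the nodes left on the way from `a` to `b`. -/
def cyclicIco (a b : Fin n) : Finset (Fin n) :=
  {t | (t - a).val < (b - a).val}

theorem right_notMem_cyclicIco (a b : Fin n) : b ∉ cyclicIco a b := by
  simp [cyclicIco]

def pathWeight (g : Fin n → M) (a b : Fin n) : M :=
  ∏ t ∈ cyclicIco a b, g t

theorem pathWeight_ne_zero {M₀ : Type*} [CommMonoidWithZero M₀] [Nontrivial M₀]
    [NoZeroDivisors M₀] {g : Fin n → M₀} (hg : ∀ i, g i ≠ 0) (a b : Fin n) :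
    pathWeight g a b ≠ 0 :=
  prod_ne_zero_iff.2 fun t _ => hg t

variable [NeZero n]

@[simp]
theorem cyclicIco_self (a : Fin n) : cyclicIco a a = ∅ := by
  simp [cyclicIco]

theorem cyclicIco_add_one_right {a b : Fin n} (h : b + 1 ≠ a) :
    cyclicIco a (b + 1) = insert b (cyclicIco a b) := by
  have hshift : b + 1 - a = b - a + 1 := by abel
  have hsucc : (b + 1 - a).val = (b - a).val + 1 := by
    rw [hshift]
    exact Fin.val_add_one_of_add_one_ne_zero (by rwa [← hshift, sub_ne_zero])
  have hval : ∀ t : Fin n, (t - a).val = (b - a).val ↔ t = b := fun t => by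
    rw [Fin.val_inj, sub_left_inj]
  ext t
  simp only [cyclicIco, mem_filter, mem_univ, true_and, mem_insert, hsucc, ← hval t]
  omega

theorem cyclicIco_add_one_self (a : Fin n) : cyclicIco (a + 1) a = univ.erase a := by
  have hneg : a - (a + 1) = -1 := by abel
  ext t
  rw [cyclicIco, mem_filter, hneg, Fin.val_lt_val_neg_one_iff, mem_erase, Ne, Ne,
    sub_eq_iff_eq_add, add_comm a, neg_add_cancel_left]
  simp

@[simp]
theorem pathWeight_self (g : Fin n → M) (a : Fin n) : pathWeight g a a = 1 := by
  simp [pathWeight]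

theorem pathWeight_add_one_right (g : Fin n → M) {a b : Fin n} (h : b + 1 ≠ a) :
    pathWeight g a (b + 1) = g b * pathWeight g a b := by
  rw [pathWeight, cyclicIco_add_one_right h, prod_insert (right_notMem_cyclicIco a b),
    pathWeight]

theorem mul_pathWeight_add_one_self (g : Fin n → M) (a : Fin n) :
    g a * pathWeight g (a + 1) a = ∏ i, g i := by
  rw [pathWeight, cyclicIco_add_one_self, mul_prod_erase _ _ (mem_univ a)]

end PathWeight

section CycleMatrix

variable {n : ℕ} [NeZero n] {K : Type*} [Field K] (g : Fin n → K)

theorem cycleMatrix_mul_apply (M : Matrix (Fin n) (Fin n) K) (a b : Fin n) :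
    (cycleMatrix g * M) a b = g (a - 1) * M (a - 1) b := by
  simp only [mul_apply, cycleMatrix, of_apply, ite_mul, zero_mul, eq_comm (a := a),
    ← eq_sub_iff_add_eq, sum_ite_eq', mem_univ, if_true]

theorem mul_cycleMatrix_apply (M : Matrix (Fin n) (Fin n) K) (a b : Fin n) :
    (M * cycleMatrix g) a b = M a (b + 1) * g b := by
  simp only [mul_apply, cycleMatrix, of_apply, mul_ite, mul_zero, sum_ite_eq', mem_univ, if_true]

theorem one_sub_cycleMatrix_mul_pathWeight (hP : 1 - ∏ i, g i ≠ 0) :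
    (1 - cycleMatrix g) * of (fun r c => pathWeight g c r / (1 - ∏ i, g i)) = 1 := by
  ext a b
  rw [sub_mul, one_mul, Matrix.sub_apply, cycleMatrix_mul_apply, of_apply, of_apply, one_apply]
  by_cases hab : a = b
  · subst hab
    have hloop := mul_pathWeight_add_one_self g (a - 1)
    rw [sub_add_cancel] at hloop
    rw [if_pos rfl, pathWeight_self, mul_div_assoc', hloop, div_sub_div_same, div_self hP]
  · have hstep := pathWeight_add_one_right g (a := b) (b := a - 1) (by rwa [sub_add_cancel])
    rw [sub_add_cancel] at hstep
    rw [if_neg hab, hstep]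
    ring

theorem inv_one_sub_cycleMatrix (hP : 1 - ∏ i, g i ≠ 0) :
    (1 - cycleMatrix g)⁻¹ = of (fun r c => pathWeight g c r / (1 - ∏ i, g i)) :=
  inv_eq_right_inv (one_sub_cycleMatrix_mul_pathWeight g hP)

variable {g}

theorem apply_eq_of_one_sub_cycleMatrix_mul_eq_one {M : Matrix (Fin n) (Fin n) K}
    (hM : (1 - cycleMatrix g) * M = 1) {a b : Fin n} (h : a ≠ b) :
    M a b = g (a - 1) * M (a - 1) b := by
  have := congrFun (congrFun hM a) b
  rwa [sub_mul, one_mul, Matrix.sub_apply, cycleMatrix_mul_apply, one_apply_ne h,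
    sub_eq_zero] at this

theorem apply_eq_of_mul_one_sub_cycleMatrix_eq_one {M : Matrix (Fin n) (Fin n) K}
    (hM : M * (1 - cycleMatrix g) = 1) {a b : Fin n} (h : a ≠ b) :
    M a b = M a (b + 1) * g b := by
  have := congrFun (congrFun hM a) b
  rwa [mul_sub, mul_one, Matrix.sub_apply, mul_cycleMatrix_apply, one_apply_ne h,
    sub_eq_zero] at this

end CycleMatrix

theorem edge_from_T_entries_general {K : Type*} [Field K] {n : ℕ} [NeZero n]
    (g : Fin n → K) (hg : ∀ i, g i ≠ 0) (hP : 1 - ∏ i, g i ≠ 0) :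
    let T := (1 - cycleMatrix g)⁻¹
    ∀ i j : Fin n, j ≠ i → j ≠ i + 1 →
      g i = T j i / T j (i + 1) ∧ g i = T (i + 1) j / T i j := by
  intro T i j hji hji1
  have hT : T = of fun r c => pathWeight g c r / (1 - ∏ i, g i) := inv_one_sub_cycleMatrix g hP
  have hright : (1 - cycleMatrix g) * T = 1 := hT ▸ one_sub_cycleMatrix_mul_pathWeight g hP
  have hleft : T * (1 - cycleMatrix g) = 1 := mul_eq_one_comm.mp hright
  have hT_ne_zero (r c : Fin n) : T r c ≠ 0 := by
    rw [hT, of_apply]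
    exact div_ne_zero (pathWeight_ne_zero hg c r) hP
  have hrow := apply_eq_of_mul_one_sub_cycleMatrix_eq_one hleft hji
  have hcol := apply_eq_of_one_sub_cycleMatrix_mul_eq_one hright (Ne.symm hji1)
  rw [add_sub_cancel_right] at hcol
  exact ⟨eq_div_of_mul_eq (hT_ne_zero _ _) (by rw [hrow, mul_comm]),
    eq_div_of_mul_eq (hT_ne_zero _ _) hcol.symm⟩

/-- For nonzero edge weights and `1 - P ≠ 0`, the weight `g i` of the edge `i → i+1` is
recovered from entries of `T = (I-G)⁻¹`: `g i = T j i / T j (i+1) = T (i+1) j / T i j`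
for any node `j ∉ {i, i+1}`. -/
theorem edge_from_T_entries {K : Type*} [Field K] {n : ℕ} [NeZero n] (hn : 2 ≤ n)
    (g : Fin n → K) (hg : ∀ i, g i ≠ 0) (hP : 1 - ∏ i, g i ≠ 0) :
    let T := (1 - cycleMatrix g)⁻¹
    ∀ i j : Fin n, j ≠ i → j ≠ i + 1 →
      g i = T j i / T j (i + 1) ∧ g i = T (i + 1) j / T i j :=
  edge_from_T_entries_general g hg hP
end

section
/- In a directed n-cycle with nonzero edge weights, suppose nodes k and n are measured (i.e. rows k and n of T are available restricted to excited columns) and nodes k+1 and 1 are excited, with 1 ≤ k ≤ n-2. Then (T_{n1} * T_{k,k+1}) / (T_{k1} * T_{n,k+1}) = P, the full loop product; i.e. these four entries of T = (I-G)^{-1} determine P. -/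
/-! Row `r + 1` of `(I - G) T = I` reads `T (r+1) j = δ (r+1) j + g r * T r j`, so walking down a
column of `T` without crossing the diagonal multiplies the entry by the weights of the edges
passed. `T_{n1}` and `T_{k,k+1}` are reached from `T_{k1}` and `T_{n,k+1}` along the two
complementary arcs `k → n` and `n → k` of the cycle, which together pass every edge once, so the
ratio is `P`. The same walk once around the whole cycle shows that `I - G` is invertible when
`P ≠ 1` and that no diagonal entry of `T` vanishes. -/

section

open Finset Matrix Fin.NatCast

variable {K : Type*} [Field K] {n : ℕ} [NeZero n]

lemma Fin.natCast_ne_natCast_of_lt {a c : ℕ} (ha : 0 < a) (hac : a < c) (hc : c ≤ n) :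
    (a : Fin n) ≠ c := by
  intro h
  have hmod : a ≡ c [MOD n] := by simpa [Fin.ext_iff, Fin.val_natCast, Nat.ModEq] using h
  have hdvd : n ∣ c - a := (Nat.modEq_iff_dvd' hac.le).mp hmod
  exact absurd (Nat.eq_zero_of_dvd_of_lt hdvd (by omega)) (by omega)

lemma Fin.prod_range_add_natCast {M : Type*} [CommMonoid M] (f : Fin n → M) (i : Fin n) :
    ∏ m ∈ range n, f (i + m) = ∏ t, f t := by
  rw [← Fin.prod_univ_eq_prod_range (fun m => f (i + m))]
  simp only [Fin.cast_val_eq_self]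
  exact Equiv.prod_comp (Equiv.addLeft i) f

lemma Fin.apply_add_natCast_eq_prod_mul {M : Type*} [CommMonoid M] (f : Fin n → M)
    {v : Fin n → M} (i : Fin n) (d : ℕ)
    (h : ∀ m < d, v (i + m + 1) = f (i + m) * v (i + m)) :
    v (i + d) = (∏ m ∈ range d, f (i + m)) * v i := by
  induction d with
  | zero => simp
  | succ d ih =>
    rw [prod_range_succ, Nat.cast_succ, ← add_assoc, h d d.lt_succ_self,
      ih fun m hm => h m (by omega), mul_left_comm, mul_assoc]

lemma one_sub_cycleMatrix_mulVec_add_one (g v : Fin n → K) (r : Fin n) :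
    ((1 - cycleMatrix g) *ᵥ v) (r + 1) = v (r + 1) - g r * v r := by
  rw [sub_mulVec, one_mulVec, Pi.sub_apply]
  simp [cycleMatrix, mulVec, dotProduct]

section

variable {g : Fin n → K} (hP : 1 - ∏ t, g t ≠ 0)
include hP

lemma eq_zero_of_one_sub_cycleMatrix_mulVec_eq_zero {v : Fin n → K}
    (hv : (1 - cycleMatrix g) *ᵥ v = 0) : v = 0 := by
  have hstep : ∀ r, v (r + 1) = g r * v r := fun r => by
    have h := one_sub_cycleMatrix_mulVec_add_one g v r
    rw [hv, Pi.zero_apply] at h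
    exact sub_eq_zero.mp h.symm
  funext i
  have hloop := Fin.apply_add_natCast_eq_prod_mul g i n fun m _ => hstep (i + m)
  rw [Fin.natCast_self, add_zero, Fin.prod_range_add_natCast] at hloop
  have h : (1 - ∏ t, g t) * v i = 0 := by linear_combination hloop
  exact (mul_eq_zero.mp h).resolve_left hP

lemma one_sub_cycleMatrix_mul_inv : (1 - cycleMatrix g) * (1 - cycleMatrix g)⁻¹ = 1 := by
  refine mul_nonsing_inv _ (isUnit_iff_ne_zero.mpr fun hdet => ?_)
  obtain ⟨v, hv0, hv⟩ := exists_mulVec_eq_zero_iff.mpr hdet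
  exact hv0 (eq_zero_of_one_sub_cycleMatrix_mulVec_eq_zero hP hv)

lemma inv_one_sub_cycleMatrix_apply_add_one (r j : Fin n) :
    (1 - cycleMatrix g)⁻¹ (r + 1) j =
      (1 : Matrix (Fin n) (Fin n) K) (r + 1) j + g r * (1 - cycleMatrix g)⁻¹ r j := by
  have h := congrFun (congrFun (one_sub_cycleMatrix_mul_inv hP) (r + 1)) j
  rw [show ((1 - cycleMatrix g) * (1 - cycleMatrix g)⁻¹) (r + 1) j =
      ((1 - cycleMatrix g) *ᵥ fun l => (1 - cycleMatrix g)⁻¹ l j) (r + 1) from rfl,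
    one_sub_cycleMatrix_mulVec_add_one] at h
  linear_combination h

lemma inv_one_sub_cycleMatrix_apply_add_natCast (i : Fin n) {c d : ℕ} (hdc : d < c)
    (hc : c ≤ n) :
    (1 - cycleMatrix g)⁻¹ (i + d) (i + c) =
      (∏ m ∈ range d, g (i + m)) * (1 - cycleMatrix g)⁻¹ i (i + c) :=
  Fin.apply_add_natCast_eq_prod_mul g (v := fun r => (1 - cycleMatrix g)⁻¹ r (i + c)) i d
    fun m hm => by
      rw [inv_one_sub_cycleMatrix_apply_add_one hP, one_apply_ne, zero_add]
      rw [add_assoc, ne_eq, add_right_inj, ← Nat.cast_succ]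
      exact Fin.natCast_ne_natCast_of_lt (by omega) (by omega) hc

lemma inv_one_sub_cycleMatrix_apply_self_ne_zero (j : Fin n) :
    (1 - cycleMatrix g)⁻¹ j j ≠ 0 := by
  intro h0
  have hprev := inv_one_sub_cycleMatrix_apply_add_natCast hP j (c := n) (d := n - 1)
    (Nat.sub_lt (NeZero.pos n) one_pos) le_rfl
  rw [Fin.natCast_self, add_zero, h0, mul_zero] at hprev
  have hwrap : j + ((n - 1 : ℕ) : Fin n) + 1 = j := by
    rw [add_assoc, ← Nat.cast_add_one, Nat.sub_add_cancel NeZero.one_le, Fin.natCast_self, add_zero]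
  have h := inv_one_sub_cycleMatrix_apply_add_one hP (j + (n - 1 : ℕ)) j
  rw [hwrap, h0, hprev, one_apply_eq] at h
  norm_num at h

lemma inv_one_sub_cycleMatrix_apply_add_natCast_self_ne_zero (hg : ∀ i, g i ≠ 0) (j : Fin n)
    {d : ℕ} (hd : d < n) : (1 - cycleMatrix g)⁻¹ (j + d) j ≠ 0 := by
  have h := inv_one_sub_cycleMatrix_apply_add_natCast hP j hd le_rfl
  rw [Fin.natCast_self, add_zero] at h
  rw [h]
  exact mul_ne_zero (prod_ne_zero_iff.mpr fun m _ => hg _)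
    (inv_one_sub_cycleMatrix_apply_self_ne_zero hP j)

lemma inv_one_sub_cycleMatrix_cross_mul (i : Fin n) {p e c : ℕ} (hp : 0 < p) (hpe : p ≤ e)
    (hec : e < c) (hc : c ≤ n) :
    (1 - cycleMatrix g)⁻¹ (i + e) (i + c) * (1 - cycleMatrix g)⁻¹ i (i + p) =
      (∏ t, g t) *
        ((1 - cycleMatrix g)⁻¹ i (i + c) * (1 - cycleMatrix g)⁻¹ (i + e) (i + p)) := by
  have hen : e ≤ n := (hec.trans_le hc).le
  have hdown := inv_one_sub_cycleMatrix_apply_add_natCast hP i hec hc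
  have hup := inv_one_sub_cycleMatrix_apply_add_natCast hP (i + e) (d := n - e) (c := n - e + p)
    (by omega) (by omega)
  have hwrap : ((e : ℕ) : Fin n) + ((n - e : ℕ) : Fin n) = 0 := by
    rw [← Nat.cast_add, Nat.add_sub_cancel' hen, Fin.natCast_self]
  have hback : i + e + ((n - e : ℕ) : Fin n) = i := by rw [add_assoc, hwrap, add_zero]
  rw [hback, Nat.cast_add, ← add_assoc, hback] at hup
  have hloop : (∏ m ∈ range e, g (i + m)) * ∏ m ∈ range (n - e), g (i + e + m) = ∏ t, g t := by
    have h := prod_range_add (fun m => g (i + m)) e (n - e)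
    rw [Nat.add_sub_cancel' hen, Fin.prod_range_add_natCast] at h
    simp only [Nat.cast_add, ← add_assoc] at h
    exact h.symm
  rw [hdown, hup, ← hloop]
  ring

end

end

-- Node `m` of the 1-based labelling is `⟨m - 1, _⟩ : Fin n`.
open Fin.NatCast in
/-- If nodes `k` and `n` are measured and nodes `k+1` and `1` are excited
(1-based labels; `1 ≤ k ≤ n-2`), then the four observed entries of `T = (I-G)⁻¹`
determine the loop product: `(T_{n1} T_{k,k+1})/(T_{k1} T_{n,k+1}) = P`. -/
theorem two_ME_pairs_determine_P {K : Type*} [Field K] {n : ℕ} [NeZero n]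
    (k : ℕ) (hk1 : 1 ≤ k) (hk2 : k ≤ n - 2)
    (g : Fin n → K) (hg : ∀ i, g i ≠ 0) (hP : 1 - ∏ i, g i ≠ 0) :
    let T := (1 - cycleMatrix g)⁻¹
    (T ⟨n - 1, by omega⟩ ⟨0, by omega⟩ * T ⟨k - 1, by omega⟩ ⟨k, by omega⟩) /
        (T ⟨k - 1, by omega⟩ ⟨0, by omega⟩ * T ⟨n - 1, by omega⟩ ⟨k, by omega⟩) =
      ∏ i, g i := by
  intro T
  simp only [← Fin.natCast_eq_mk, Fin.natCast_zero]
  have hcross := inv_one_sub_cycleMatrix_cross_mul hP ((k - 1 : ℕ) : Fin n)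
    (p := 1) (e := n - k) (c := n - k + 1) one_pos (by omega) (by omega) (by omega)
  have hlast : ((k - 1 : ℕ) : Fin n) + ((n - k : ℕ) : Fin n) = ((n - 1 : ℕ) : Fin n) := by
    rw [← Nat.cast_add]; congr 1; omega
  have hzero : ((k - 1 : ℕ) : Fin n) + ((n - k + 1 : ℕ) : Fin n) = 0 := by
    rw [← Nat.cast_add, show k - 1 + (n - k + 1) = n by omega, Fin.natCast_self]
  have hnext : ((k - 1 : ℕ) : Fin n) + ((1 : ℕ) : Fin n) = (k : ℕ) := by
    rw [← Nat.cast_add]; congr 1; omega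
  rw [hlast, hzero, hnext] at hcross
  have hden₁ : T ((k - 1 : ℕ) : Fin n) 0 ≠ 0 := by
    simpa using inv_one_sub_cycleMatrix_apply_add_natCast_self_ne_zero hP hg 0 (d := k - 1)
      (by omega)
  have hden₂ : T ((n - 1 : ℕ) : Fin n) (k : ℕ) ≠ 0 := by
    have h := inv_one_sub_cycleMatrix_apply_add_natCast_self_ne_zero hP hg (k : Fin n)
      (d := n - 1 - k) (by omega)
    rwa [← Nat.cast_add, Nat.add_sub_cancel' (by omega)] at h
  rw [div_eq_iff (mul_ne_zero hden₁ hden₂)]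
  exact hcross
end

section
/- For the 2-node loop with nonzero edge weights g_1 (edge 1→2) and g_2 (edge 2→1), if no node is both excited and measured and the necessary condition B ∪ C = {1,2}, B ≠ ∅, C ≠ ∅ holds, then exactly one off-diagonal entry of T = (I-G)^{-1} is observed, and there exist two distinct pairs (g_1, g_2) ≠ (g_1', g_2') of nonzero edge weights yielding the same observed entry. Hence the 2-node loop is not identifiable without a node that is both excited and measured. -/
/-- The network matrix of the 2-node loop with edge weights `g 0` (edge 1→2) and
`g 1` (edge 2→1). -/
def twoLoop (g : Fin 2 → ℝ) : Matrix (Fin 2) (Fin 2) ℝ :=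
  !![0, g 1; g 0, 0]

/-!
The square of the loop matrix `G` is `p • 1` with loop gain `p = g₀ g₁`, so
`(1 - G)⁻¹ = (1 - p)⁻¹ • (1 + G)` and the off-diagonal entries of `T` are `gₖ / (1 - p)`.
These are unchanged under `g ↦ -p⁻¹ • g`, which replaces the loop gain `p` by `p⁻¹`;
for `p ∉ {0, 1, -1}` this gives a different pair of nonzero weights. When no node is both
excited and measured, `B` and `C` are complementary singletons in the two nodes, so only
one off-diagonal entry of `T` is observed.
-/

theorem Finset.exists_eq_singleton_of_disjoint_of_card_eq_two {α : Type*} [Fintype α]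
    (hα : Fintype.card α = 2) {s t : Finset α} (hs : s.Nonempty) (ht : t.Nonempty)
    (hst : Disjoint s t) : ∃ a b, a ≠ b ∧ s = {a} ∧ t = {b} := by
  classical
  have hcard : s.card + t.card ≤ 2 := by
    rw [← Finset.card_union_of_disjoint hst, ← hα]
    exact Finset.card_le_univ _
  obtain ⟨a, rfl⟩ := Finset.card_eq_one.mp (by linarith [hs.card_pos, ht.card_pos] :
    s.card = 1)
  obtain ⟨b, rfl⟩ := Finset.card_eq_one.mp
    (by rw [Finset.card_singleton] at hcard; linarith [ht.card_pos] : t.card = 1)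
  exact ⟨a, b, fun hab => by simp [hab] at hst, rfl, rfl⟩

theorem twoLoop_smul (c : ℝ) (g : Fin 2 → ℝ) : twoLoop (c • g) = c • twoLoop g := by
  ext i j; fin_cases i <;> fin_cases j <;> simp [twoLoop]

theorem twoLoop_mul_self (g : Fin 2 → ℝ) : twoLoop g * twoLoop g = (g 0 * g 1) • 1 := by
  ext i j; fin_cases i <;> fin_cases j <;> simp [twoLoop, mul_comm]

theorem inv_one_sub_twoLoop (g : Fin 2 → ℝ) (hg : 1 - g 0 * g 1 ≠ 0) :
    (1 - twoLoop g)⁻¹ = (1 - g 0 * g 1)⁻¹ • (1 + twoLoop g) := by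
  apply Matrix.inv_eq_right_inv
  have : (1 - twoLoop g) * (1 + twoLoop g) = (1 - g 0 * g 1) • 1 := by
    rw [sub_mul, one_mul, mul_add, mul_one, twoLoop_mul_self, sub_smul, one_smul]; abel
  rw [Matrix.mul_smul, this, smul_smul, inv_mul_cancel₀ hg, one_smul]

theorem inv_one_sub_twoLoop_apply_of_ne (g : Fin 2 → ℝ) (hg : 1 - g 0 * g 1 ≠ 0) {i j : Fin 2}
    (hij : i ≠ j) : (1 - twoLoop g)⁻¹ i j = (1 - g 0 * g 1)⁻¹ * twoLoop g i j := by
  simp [inv_one_sub_twoLoop g hg, Matrix.one_apply_ne hij]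

noncomputable def loopDual (g : Fin 2 → ℝ) : Fin 2 → ℝ :=
  -(g 0 * g 1)⁻¹ • g

theorem loopDual_gain (g : Fin 2 → ℝ) : loopDual g 0 * loopDual g 1 = (g 0 * g 1)⁻¹ := by
  by_cases h : g 0 * g 1 = 0
  · simp [loopDual, h]
  · simp only [loopDual, Pi.smul_apply, smul_eq_mul]
    field_simp

theorem inv_one_sub_twoLoop_loopDual_apply_of_ne (g : Fin 2 → ℝ) (h₀ : g 0 * g 1 ≠ 0)
    (h₁ : 1 - g 0 * g 1 ≠ 0) {i j : Fin 2} (hij : i ≠ j) :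
    (1 - twoLoop (loopDual g))⁻¹ i j = (1 - twoLoop g)⁻¹ i j := by
  have h₁' : 1 - (g 0 * g 1)⁻¹ ≠ 0 := by
    rwa [sub_ne_zero, ne_comm, inv_ne_one, ne_comm, ← sub_ne_zero]
  rw [inv_one_sub_twoLoop_apply_of_ne _ (by rwa [loopDual_gain]) hij,
    inv_one_sub_twoLoop_apply_of_ne g h₁ hij, loopDual_gain, loopDual, twoLoop_smul,
    Matrix.smul_apply, smul_eq_mul, ← mul_assoc]
  congr 1
  generalize g 0 * g 1 = p at *
  have hp : p - 1 ≠ 0 := fun h => h₁ (by linarith)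
  field_simp
  ring

theorem loopDual_ne_self (g : Fin 2 → ℝ) (hg : ∀ i, g i ≠ 0) (h : g 0 * g 1 ≠ -1) :
    loopDual g ≠ g := by
  intro heq
  have := congrFun heq 0
  simp only [loopDual, Pi.smul_apply, smul_eq_mul] at this
  have h0 := hg 0
  have h1 := hg 1
  field_simp at this
  exact h (by linarith)

theorem two_node_loop_not_identifiable_general (B C : Finset (Fin 2))
    (hB : B.Nonempty) (hC : C.Nonempty)
    (hdisj : B ∩ C = ∅) :
    (∃! p : Fin 2 × Fin 2, p.1 ∈ C ∧ p.2 ∈ B) ∧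
    (∀ p : Fin 2 × Fin 2, p.1 ∈ C → p.2 ∈ B → p.1 ≠ p.2) ∧
    ∃ g g' : Fin 2 → ℝ,
      (∀ i, g i ≠ 0) ∧ (∀ i, g' i ≠ 0) ∧
      1 - g 0 * g 1 ≠ 0 ∧ 1 - g' 0 * g' 1 ≠ 0 ∧
      g ≠ g' ∧
      ∀ i ∈ C, ∀ j ∈ B, (1 - twoLoop g)⁻¹ i j = (1 - twoLoop g')⁻¹ i j := by
  obtain ⟨j, i, hji, rfl, rfl⟩ := Finset.exists_eq_singleton_of_disjoint_of_card_eq_two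
    (Fintype.card_fin 2) hB hC (Finset.disjoint_iff_inter_eq_empty.mpr hdisj)
  set g : Fin 2 → ℝ := ![1, 2]
  have hg : ∀ k, g k ≠ 0 := by intro k; fin_cases k <;> simp [g]
  have hgain : g 0 * g 1 = 2 := by norm_num [g]
  refine ⟨⟨(i, j), by simp, by simp⟩, by simpa using hji.symm, g, loopDual g, hg, ?_,
    by norm_num [hgain], by norm_num [loopDual_gain, hgain],
    (loopDual_ne_self g hg (by norm_num [hgain])).symm, ?_⟩
  · intro k
    simpa [loopDual, hgain] using hg k
  · simp only [Finset.mem_singleton]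
    rintro _ rfl _ rfl
    rw [inv_one_sub_twoLoop_loopDual_apply_of_ne g (by norm_num [hgain])
      (by norm_num [hgain]) hji.symm]

/-- For the 2-node loop, if no node is both excited and measured while the necessary
condition `B ∪ C = {1,2}`, `B ≠ ∅`, `C ≠ ∅` holds, then exactly one (off-diagonal)
entry of `T = (I-G)⁻¹` is observed, and two distinct pairs of nonzero edge weights
yield the same observed entry: the loop is not identifiable. -/
theorem two_node_loop_not_identifiable (B C : Finset (Fin 2))
    (hcover : B ∪ C = Finset.univ) (hB : B.Nonempty) (hC : C.Nonempty)
    (hdisj : B ∩ C = ∅) :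
    (∃! p : Fin 2 × Fin 2, p.1 ∈ C ∧ p.2 ∈ B) ∧
    (∀ p : Fin 2 × Fin 2, p.1 ∈ C → p.2 ∈ B → p.1 ≠ p.2) ∧
    ∃ g g' : Fin 2 → ℝ,
      (∀ i, g i ≠ 0) ∧ (∀ i, g' i ≠ 0) ∧
      1 - g 0 * g 1 ≠ 0 ∧ 1 - g' 0 * g' 1 ≠ 0 ∧
      g ≠ g' ∧
      ∀ i ∈ C, ∀ j ∈ B, (1 - twoLoop g)⁻¹ i j = (1 - twoLoop g')⁻¹ i j :=
  two_node_loop_not_identifiable_general B C hB hC hdisj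
end

section
/- For the 3-node loop with nonzero edge weights g_1, g_2, g_3 and P = g_1 g_2 g_3, 1-P ≠ 0: if no node is both excited and measured and B ∪ C = {1,2,3} with B, C nonempty and disjoint, then at most 2 algebraically independent functions of (g_1,g_2,g_3) are observed, and there exist distinct weight triples (g_1,g_2,g_3) ≠ (g_1',g_2',g_3') giving the same observed submatrix of T = (I-G)^{-1}. Hence the 3-node loop is not identifiable without an excited-and-measured node. -/
/-! With `P = g 0 * g 1 * g 2`, the entry `(i, j)` of `T = (1 - G)⁻¹` is the product of the
weights along the path from `j` to `i`, divided by `1 - P`. As `B` and `C` split the three nodes,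
one of them is a single node, so the observed entries are `g k / (1 - P)` and
`g k * g m / (1 - P)` for two distinct edges `k, m`. Both are kept when `g m` stays fixed while
`g k` and the third weight move along `g k / (1 - P) = const`, e.g. from `(1, 1, 1/2)` to
`(4, 1, -1/4)` in the order `(g k, g m, g l)`. -/

/-- The network matrix of the 3-node loop with edge weights `g 0, g 1, g 2` on the
edges 1→2, 2→3, 3→1. -/
def threeLoop (g : Fin 3 → ℝ) : Matrix (Fin 3) (Fin 3) ℝ :=
  !![0, 0, g 2; g 0, 0, 0; 0, g 1, 0]

open Matrix Finset

lemma Fin.eq_add_one_or_eq_add_two_of_ne {i j : Fin 3} (h : i ≠ j) : i = j + 1 ∨ i = j + 2 := by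
  revert i j; decide

def loopGain (g : Fin 3 → ℝ) : ℝ := g 0 * g 1 * g 2

lemma inv_one_sub_threeLoop (g : Fin 3 → ℝ) (hP : 1 - loopGain g ≠ 0) :
    (1 - threeLoop g)⁻¹ = (1 - loopGain g)⁻¹ •
      !![1, g 1 * g 2, g 2; g 0, 1, g 0 * g 2; g 0 * g 1, g 1, 1] := by
  have h : (1 - threeLoop g) * !![1, g 1 * g 2, g 2; g 0, 1, g 0 * g 2; g 0 * g 1, g 1, 1] =
      (1 - loopGain g) • 1 := by
    ext i j
    fin_cases i <;> fin_cases j <;>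
      simp [threeLoop, loopGain, mul_apply, Fin.sum_univ_three, one_apply] <;> ring
  refine inv_eq_right_inv ?_
  rw [Matrix.mul_smul, h, smul_smul, inv_mul_cancel₀ hP, one_smul]

lemma inv_one_sub_threeLoop_apply_add_one (g : Fin 3 → ℝ) (hP : 1 - loopGain g ≠ 0)
    (j : Fin 3) :
    (1 - threeLoop g)⁻¹ (j + 1) j = g j / (1 - loopGain g) := by
  rw [inv_one_sub_threeLoop g hP]
  fin_cases j <;> simp [div_eq_inv_mul]

lemma inv_one_sub_threeLoop_apply_add_two (g : Fin 3 → ℝ) (hP : 1 - loopGain g ≠ 0)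
    (j : Fin 3) :
    (1 - threeLoop g)⁻¹ (j + 2) j = g j / (1 - loopGain g) * g (j + 1) := by
  rw [inv_one_sub_threeLoop g hP]
  fin_cases j <;> simp <;> ring

lemma inv_one_sub_threeLoop_apply_self_add_two (g : Fin 3 → ℝ) (hP : 1 - loopGain g ≠ 0)
    (i : Fin 3) :
    (1 - threeLoop g)⁻¹ i (i + 2) = g (i + 2) / (1 - loopGain g) := by
  rw [inv_one_sub_threeLoop g hP]
  fin_cases i <;> simp [div_eq_inv_mul]

lemma inv_one_sub_threeLoop_apply_self_add_one (g : Fin 3 → ℝ) (hP : 1 - loopGain g ≠ 0)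
    (i : Fin 3) :
    (1 - threeLoop g)⁻¹ i (i + 1) = g (i + 2) / (1 - loopGain g) * g (i + 1) := by
  rw [inv_one_sub_threeLoop g hP]
  fin_cases i <;> simp <;> ring

lemma exists_ne_weights (k m : Fin 3) (hkm : k ≠ m) :
    ∃ g g' : Fin 3 → ℝ, (∀ i, g i ≠ 0) ∧ (∀ i, g' i ≠ 0) ∧
      1 - loopGain g ≠ 0 ∧ 1 - loopGain g' ≠ 0 ∧ g ≠ g' ∧
      g k / (1 - loopGain g) = g' k / (1 - loopGain g') ∧ g m = g' m := by
  set g : Fin 3 → ℝ := fun i => if i = k then 1 else if i = m then 1 else 1 / 2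
  set g' : Fin 3 → ℝ := fun i => if i = k then 4 else if i = m then 1 else -1 / 4
  have hP : loopGain g = 1 / 2 := by
    fin_cases k <;> fin_cases m <;> simp_all [g, loopGain]
  have hP' : loopGain g' = -1 := by
    fin_cases k <;> fin_cases m <;> simp_all [g', loopGain] <;> norm_num
  refine ⟨g, g', fun i => ?_, fun i => ?_, ?_, ?_, fun h => ?_, ?_, ?_⟩
  · simp only [g]; split_ifs <;> norm_num
  · simp only [g']; split_ifs <;> norm_num
  · norm_num [hP]
  · norm_num [hP']
  · simpa [g, g'] using congrFun h k
  · rw [hP, hP']; norm_num [g, g']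
  · simp [g, g', hkm.symm]

lemma inv_one_sub_threeLoop_col_eq {g g' : Fin 3 → ℝ} (hP : 1 - loopGain g ≠ 0)
    (hP' : 1 - loopGain g' ≠ 0) {j : Fin 3}
    (hk : g j / (1 - loopGain g) = g' j / (1 - loopGain g')) (hm : g (j + 1) = g' (j + 1))
    {i : Fin 3} (hij : i ≠ j) : (1 - threeLoop g)⁻¹ i j = (1 - threeLoop g')⁻¹ i j := by
  rcases Fin.eq_add_one_or_eq_add_two_of_ne hij with rfl | rfl
  · rw [inv_one_sub_threeLoop_apply_add_one g hP, inv_one_sub_threeLoop_apply_add_one g' hP', hk]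
  · rw [inv_one_sub_threeLoop_apply_add_two g hP, inv_one_sub_threeLoop_apply_add_two g' hP',
      hk, hm]

lemma inv_one_sub_threeLoop_row_eq {g g' : Fin 3 → ℝ} (hP : 1 - loopGain g ≠ 0)
    (hP' : 1 - loopGain g' ≠ 0) {i : Fin 3}
    (hk : g (i + 2) / (1 - loopGain g) = g' (i + 2) / (1 - loopGain g'))
    (hm : g (i + 1) = g' (i + 1))
    {j : Fin 3} (hji : j ≠ i) : (1 - threeLoop g)⁻¹ i j = (1 - threeLoop g')⁻¹ i j := by
  rcases Fin.eq_add_one_or_eq_add_two_of_ne hji with rfl | rfl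
  · rw [inv_one_sub_threeLoop_apply_self_add_one g hP,
      inv_one_sub_threeLoop_apply_self_add_one g' hP', hk, hm]
  · rw [inv_one_sub_threeLoop_apply_self_add_two g hP,
      inv_one_sub_threeLoop_apply_self_add_two g' hP', hk]

/-- For the 3-node loop, if no node is both excited and measured while
`B ∪ C = {1,2,3}` with `B, C` nonempty and disjoint, then at most two entries of
`T = (I-G)⁻¹` are observed, and two distinct triples of nonzero edge weights yield the
same observed submatrix: the loop is not identifiable. -/
theorem three_node_loop_not_identifiable (B C : Finset (Fin 3))
    (hcover : B ∪ C = Finset.univ) (hB : B.Nonempty) (hC : C.Nonempty)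
    (hdisj : B ∩ C = ∅) :
    C.card * B.card ≤ 2 ∧
    ∃ g g' : Fin 3 → ℝ,
      (∀ i, g i ≠ 0) ∧ (∀ i, g' i ≠ 0) ∧
      1 - g 0 * g 1 * g 2 ≠ 0 ∧ 1 - g' 0 * g' 1 * g' 2 ≠ 0 ∧
      g ≠ g' ∧
      ∀ i ∈ C, ∀ j ∈ B, (1 - threeLoop g)⁻¹ i j = (1 - threeLoop g')⁻¹ i j := by
  have hBC : Disjoint B C := disjoint_iff_inter_eq_empty.2 hdisj
  have hcard : B.card + C.card = 3 := by
    rw [← card_union_of_disjoint hBC, hcover, card_univ, Fintype.card_fin]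
  obtain ⟨hB1, hC2⟩ | ⟨hB2, hC1⟩ : B.card = 1 ∧ C.card = 2 ∨ B.card = 2 ∧ C.card = 1 := by
    have := hB.card_pos
    have := hC.card_pos
    omega
  · obtain ⟨j, rfl⟩ := card_eq_one.1 hB1
    obtain ⟨g, g', hg, hg', hP, hP', hne, hk, hm⟩ := exists_ne_weights j (j + 1) (by simp)
    refine ⟨by rw [hB1, hC2], g, g', hg, hg', hP, hP', hne, fun i hi j' hj' => ?_⟩
    rw [mem_singleton.1 hj']
    exact inv_one_sub_threeLoop_col_eq hP hP' hk hm
      (ne_of_mem_of_not_mem hi (disjoint_singleton_left.1 hBC))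
  · obtain ⟨i, rfl⟩ := card_eq_one.1 hC1
    obtain ⟨g, g', hg, hg', hP, hP', hne, hk, hm⟩ := exists_ne_weights (i + 2) (i + 1) (by simp)
    refine ⟨by rw [hB2, hC1], g, g', hg, hg', hP, hP', hne, fun i' hi j hj => ?_⟩
    rw [mem_singleton.1 hi]
    exact inv_one_sub_threeLoop_row_eq hP hP' hk hm
      (ne_of_mem_of_not_mem hj (disjoint_singleton_right.1 hBC))
end

section
/- In a directed n-cycle with nonzero edge weights, if the loop product P is known and additionally T_{n1} and the entries T_{ni} for excited i and T_{i1} for measured i are known (where every node i ∈ {2,…,n} is excited or measured), then each edge weight g_{i-1} (edge i−1 → i) is determined recursively: g_{i-1} = T_{n1}/(P_{i-2,1} T_{ni}) if i is excited, and g_{i-1} = T_{i1}(1-P)/P_{i-1,1} if i is measured, where P_{j,1} = g_1 g_2 ⋯ g_{j-1} is the product of already-determined weights; finally g_n = P/P_{n,1}. -/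
open Fin.NatCast

section
open Fin.CommRing

variable {K : Type*} {n : ℕ} [NeZero n]

lemma Fin.val_sub_one_add_one {a : Fin n} (ha : a ≠ 0) : (a - 1).val + 1 = a.val := by
  have := Fin.val_ne_zero_iff.mpr ha
  rw [Fin.val_sub_one_of_ne_zero ha]
  omega

lemma Fin.val_neg_one : (-1 : Fin n).val = n - 1 := by
  obtain ⟨m, rfl⟩ := Nat.exists_eq_succ_of_ne_zero (NeZero.ne n)
  simp [Fin.coe_neg_one]

/-- The paper's `P_{m,1}` is `cyclePathProd g 0 (m - 1)`. -/
def cyclePathProd [CommMonoid K] (g : Fin n → K) (j : Fin n) (k : ℕ) : K :=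
  ∏ t ∈ Finset.range k, g (j + t)

section CommMonoid
variable [CommMonoid K] (g : Fin n → K)

lemma cyclePathProd_add (j : Fin n) (k l : ℕ) :
    cyclePathProd g j (k + l) = cyclePathProd g j k * cyclePathProd g (j + k) l := by
  simp only [cyclePathProd, Finset.prod_range_add, Nat.cast_add, add_assoc]

lemma cyclePathProd_succ (j : Fin n) (k : ℕ) :
    cyclePathProd g j (k + 1) = cyclePathProd g j k * g (j + k) := by
  simp [cyclePathProd, Finset.prod_range_succ]

lemma cyclePathProd_succ' (j : Fin n) (k : ℕ) :
    cyclePathProd g j (k + 1) = g j * cyclePathProd g (j + 1) k := by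
  simp only [cyclePathProd, Finset.prod_range_succ', Nat.cast_succ, Nat.cast_zero, add_zero,
    add_assoc, add_comm ((_ : ℕ) : Fin n) 1, mul_comm _ (g j)]

lemma cyclePathProd_length (j : Fin n) : cyclePathProd g j n = ∏ i, g i := by
  rw [cyclePathProd, ← Fin.prod_univ_eq_prod_range (fun t => g (j + t)) n]
  simp only [Fin.cast_val_eq_self]
  exact Equiv.prod_comp (Equiv.addLeft j) g

lemma cyclePathProd_zero_eq_mul_mul {k m : ℕ} (hkm : k < m) :
    cyclePathProd g 0 m =
      cyclePathProd g 0 k * g k * cyclePathProd g (k + 1 : ℕ) (m - (k + 1)) := by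
  conv_lhs => rw [← Nat.add_sub_cancel' hkm, cyclePathProd_add, cyclePathProd_succ, zero_add,
    zero_add]

lemma prod_range_eq_cyclePathProd_zero (k : ℕ) :
    ∏ t ∈ Finset.range k, g t = cyclePathProd g 0 k := by
  simp [cyclePathProd]

end CommMonoid

lemma cyclePathProd_ne_zero [CommMonoidWithZero K] [NoZeroDivisors K] [Nontrivial K]
    {g : Fin n → K} (hg : ∀ i, g i ≠ 0) (j : Fin n) (k : ℕ) : cyclePathProd g j k ≠ 0 :=
  Finset.prod_ne_zero_iff.mpr fun _ _ => hg _

variable [Field K] (g : Fin n → K)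

lemma one_sub_cycleMatrix_mul_apply (M : Matrix (Fin n) (Fin n) K) (i j : Fin n) :
    ((1 - cycleMatrix g) * M) i j = M i j - g (i - 1) * M (i - 1) j := by
  rw [sub_mul, one_mul, Matrix.sub_apply, Matrix.mul_apply]
  have hpred (k : Fin n) : i = k + 1 ↔ k = i - 1 := by rw [eq_sub_iff_add_eq, eq_comm]
  simp only [cycleMatrix, Matrix.of_apply, ite_mul, zero_mul, hpred, Finset.sum_ite_eq',
    Finset.mem_univ, if_true]

theorem cycleMatrix_inv (hP : 1 - ∏ i, g i ≠ 0) :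
    (1 - cycleMatrix g)⁻¹ =
      Matrix.of fun i j => cyclePathProd g j (i - j).val / (1 - ∏ i, g i) := by
  refine Matrix.inv_eq_right_inv (Matrix.ext fun i j => ?_)
  rw [one_sub_cycleMatrix_mul_apply, Matrix.of_apply, Matrix.of_apply, Matrix.one_apply]
  split_ifs with hij
  · subst hij
    have hloop : g (i - 1) * cyclePathProd g i (n - 1) = ∏ i, g i := by
      rw [← sub_add_cancel i 1, add_sub_cancel_right, ← cyclePathProd_succ',
        Nat.sub_add_cancel NeZero.one_le, cyclePathProd_length]
    rw [sub_self, Fin.val_zero, sub_sub_cancel_left, Fin.val_neg_one, ← mul_div_assoc, hloop,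
      cyclePathProd, Finset.prod_range_zero, ← sub_div, div_self hP]
  · have hval := Fin.val_sub_one_add_one (sub_ne_zero.mpr hij)
    have hlast : j + (i - j - 1) = i - 1 := by abel
    rw [sub_right_comm, ← hval, cyclePathProd_succ, Fin.cast_val_eq_self, hlast, mul_comm,
      ← mul_div_assoc, sub_self]

end

theorem cycleMatrix_inv_apply_natCast {K : Type*} [Field K] {n : ℕ} [NeZero n] (g : Fin n → K)
    (hP : 1 - ∏ i, g i ≠ 0) {i j : ℕ} (hji : j ≤ i) (hi : i < n) :
    (1 - cycleMatrix g)⁻¹ i j = cyclePathProd g j (i - j) / (1 - ∏ i, g i) := by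
  open Fin.CommRing in
  rw [cycleMatrix_inv g hP, Matrix.of_apply, ← Nat.cast_sub hji, Fin.val_cast_of_lt (by omega)]

theorem recursive_identification_formulas_general {K : Type*} [Field K] {n : ℕ} [NeZero n]
    (g : Fin n → K) (hg : ∀ i, g i ≠ 0) (hP : 1 - ∏ i, g i ≠ 0)
    (B C : Finset (Fin n)) :
    let T := (1 - cycleMatrix g)⁻¹
    let P := ∏ i, g i
    let Q : ℕ → K := fun m => ∏ t ∈ Finset.range (m - 1), g ((t : ℕ) : Fin n)
    (∀ i : ℕ, 2 ≤ i → i ≤ n → ((i - 1 : ℕ) : Fin n) ∈ B →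
        g ((i - 2 : ℕ) : Fin n) =
          T ((n - 1 : ℕ) : Fin n) 0 / (Q (i - 1) * T ((n - 1 : ℕ) : Fin n) ((i - 1 : ℕ) : Fin n))) ∧
    (∀ i : ℕ, 2 ≤ i → i ≤ n → ((i - 1 : ℕ) : Fin n) ∈ C →
        g ((i - 2 : ℕ) : Fin n) = T ((i - 1 : ℕ) : Fin n) 0 * (1 - P) / Q (i - 1)) ∧
    g ((n - 1 : ℕ) : Fin n) = P / Q n := by
  intro T P Q
  have hT {i j : ℕ} (hji : j ≤ i) (hi : i < n) : T i j = cyclePathProd g j (i - j) / (1 - P) :=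
    cycleMatrix_inv_apply_natCast g hP hji hi
  have hT0 {i : ℕ} (hi : i < n) : T i 0 = cyclePathProd g 0 i / (1 - P) := by
    simpa using hT (Nat.zero_le i) hi
  have hQ (m : ℕ) : Q (m + 1) = cyclePathProd g 0 m := prod_range_eq_cyclePathProd_zero g m
  have hπ := cyclePathProd_ne_zero hg
  have hP' : 1 - P ≠ 0 := hP
  refine ⟨fun i hi2 hin _ => ?_, fun i hi2 hin _ => ?_, ?_⟩
  · obtain ⟨k, rfl⟩ : ∃ k, i = k + 2 := ⟨i - 2, by omega⟩
    rw [show k + 2 - 2 = k by omega, show k + 2 - 1 = k + 1 by omega, hT0 (by omega), hQ,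
      hT (by omega) (by omega), cyclePathProd_zero_eq_mul_mul g (by omega : k < n - 1)]
    field_simp [hπ]
  · obtain ⟨k, rfl⟩ : ∃ k, i = k + 2 := ⟨i - 2, by omega⟩
    rw [show k + 2 - 2 = k by omega, show k + 2 - 1 = k + 1 by omega, hT0 (by omega), hQ,
      cyclePathProd_succ, zero_add]
    field_simp [hπ]
  · have hloop : P = cyclePathProd g 0 (n - 1) * g (n - 1 : ℕ) := by
      rw [← zero_add ((n - 1 : ℕ) : Fin n), ← cyclePathProd_succ,
        Nat.sub_add_cancel NeZero.one_le, cyclePathProd_length]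
    have hQn : Q n = cyclePathProd g 0 (n - 1) := prod_range_eq_cyclePathProd_zero g (n - 1)
    rw [hQn, hloop]
    field_simp [hπ]

/-- Correctness of the recursive identification formulas (1-based node labels, node `i`
is index `i-1`; `Q i` is the directed-path product `g_1 ⋯ g_{i-1}` from node 1 to node
`i`): once `P` is known, each edge weight `g_{i-1}` (edge `i-1 → i`) is given by
`T_{n1}/(Q(i-1) · T_{ni})` if node `i` is excited and by `T_{i1}(1-P)/Q(i-1)` if node
`i` is measured, and finally `g_n = P / Q n`. -/
theorem recursive_identification_formulas {K : Type*} [Field K] {n : ℕ} [NeZero n]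
    (hn : 2 ≤ n) (g : Fin n → K) (hg : ∀ i, g i ≠ 0) (hP : 1 - ∏ i, g i ≠ 0)
    (B C : Finset (Fin n)) (hcover : B ∪ C = Finset.univ) :
    let T := (1 - cycleMatrix g)⁻¹
    let P := ∏ i, g i
    let Q : ℕ → K := fun m => ∏ t ∈ Finset.range (m - 1), g ((t : ℕ) : Fin n)
    (∀ i : ℕ, 2 ≤ i → i ≤ n → ((i - 1 : ℕ) : Fin n) ∈ B →
        g ((i - 2 : ℕ) : Fin n) =
          T ((n - 1 : ℕ) : Fin n) 0 / (Q (i - 1) * T ((n - 1 : ℕ) : Fin n) ((i - 1 : ℕ) : Fin n))) ∧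
    (∀ i : ℕ, 2 ≤ i → i ≤ n → ((i - 1 : ℕ) : Fin n) ∈ C →
        g ((i - 2 : ℕ) : Fin n) = T ((i - 1 : ℕ) : Fin n) 0 * (1 - P) / Q (i - 1)) ∧
    g ((n - 1 : ℕ) : Fin n) = P / Q n :=
  recursive_identification_formulas_general g hg hP B C
end
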